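/- arXiv:1106.1042 — 2 statements merged into one kernel-verified Lean document; each statement's English description precedes it below -/
import Mathlib

section
/- For all real z with |z| < 1, ∑_{n=1}^∞ H_n² z^n = (Li₂(z) + log²(1-z)) / (1-z). -/
/-- The `n`-th harmonic number `H_n = ∑_{k=1}^n 1/k`. -/
noncomputable def H (n : ℕ) : ℝ := ∑ k ∈ Finset.range n, (1 : ℝ) / (k + 1)

/-- The dilogarithm `Li₂(z) = ∑_{n=1}^∞ z^n / n²`. -/
noncomputable def Li2 (z : ℝ) : ℝ := ∑' n : ℕ, z ^ (n + 1) / ((n : ℝ) + 1) ^ 2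

lemma H_nonneg (n : ℕ) : 0 ≤ H n := by
  apply Finset.sum_nonneg; intro k _; positivity

lemma H_le (n : ℕ) : H n ≤ n := by
  calc H n ≤ ∑ k ∈ Finset.range n, (1 : ℝ) := by
        apply Finset.sum_le_sum; intro k _
        rw [div_le_one (by positivity)]
        have : (0:ℝ) ≤ (k:ℝ) := Nat.cast_nonneg k
        linarith
    _ = n := by simp

lemma H_succ (n : ℕ) : H (n + 1) = H n + 1 / (n + 1) := by
  simp [H, Finset.sum_range_succ]

lemma conv_sum (n : ℕ) :
    ∑ k ∈ Finset.range (n + 1), (1:ℝ) / ((k + 1) * (((n - k : ℕ) : ℝ) + 1))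
      = 2 / (n + 2) * H (n + 1) := by
  have key : ∀ k ∈ Finset.range (n + 1),
      (1:ℝ) / ((k + 1) * (((n - k : ℕ) : ℝ) + 1))
        = 1 / (n + 2) * (1 / (k + 1) + 1 / (((n - k : ℕ) : ℝ) + 1)) := by
    intro k hk
    have hk' : k ≤ n := Nat.lt_succ_iff.mp (Finset.mem_range.mp hk)
    have hcast : ((n - k : ℕ) : ℝ) = (n : ℝ) - k := by
      push_cast [hk']; ring
    rw [hcast]
    have h1 : (0:ℝ) < (k:ℝ) + 1 := by positivity
    have h2 : (0:ℝ) < (n:ℝ) - k + 1 := by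
      have : (k:ℝ) ≤ n := by exact_mod_cast hk'
      linarith
    field_simp
    ring
  rw [Finset.sum_congr rfl key, ← Finset.mul_sum, Finset.sum_add_distrib]
  have hrefl : ∑ k ∈ Finset.range (n + 1), (1:ℝ) / (((n - k : ℕ) : ℝ) + 1)
      = ∑ k ∈ Finset.range (n + 1), (1:ℝ) / ((k : ℝ) + 1) := by
    have h := Finset.sum_range_reflect (fun k : ℕ => (1:ℝ) / ((k : ℝ) + 1)) (n + 1)
    simp only [Nat.add_sub_cancel] at h
    exact h
  rw [hrefl]
  have : ∑ k ∈ Finset.range (n + 1), (1:ℝ) / ((k : ℝ) + 1) = H (n + 1) := by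
    simp [H]
  rw [this]; ring

/-- For real `|z| < 1`, `∑_{n=1}^∞ H_n² z^n = (Li₂(z) + log²(1-z))/(1-z)`. -/
theorem harmonic_sq_generating_function (z : ℝ) (hz : |z| < 1) :
    ∑' n : ℕ, H (n + 1) ^ 2 * z ^ (n + 1)
      = (Li2 z + Real.log (1 - z) ^ 2) / (1 - z) := by
  have hz1 : z < 1 := (abs_lt.mp hz).2
  have hz0 : (1:ℝ) - z ≠ 0 := by linarith
  set L : ℝ := -Real.log (1 - z) with hL
  -- log series
  have hlog : HasSum (fun n : ℕ => z ^ (n + 1) / (n + 1)) L :=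
    Real.hasSum_pow_div_log_of_abs_lt_one hz
  -- summable norms of log series
  have hgeom : Summable (fun n : ℕ => |z| ^ n) :=
    summable_geometric_of_lt_one (abs_nonneg z) hz
  have hlog_norm : Summable (fun n : ℕ => ‖z ^ (n + 1) / (n + 1)‖) := by
    apply Summable.of_nonneg_of_le (fun n => norm_nonneg _) _ (hgeom.mul_left |z|)
    intro n
    have h1 : (1:ℝ) ≤ (n:ℝ) + 1 := by
      have : (0:ℝ) ≤ (n:ℝ) := Nat.cast_nonneg n; linarith
    rw [Real.norm_eq_abs, abs_div, abs_pow]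
    rw [abs_of_pos (by positivity : (0:ℝ) < (n:ℝ)+1)]
    calc |z| ^ (n + 1) / ((n:ℝ) + 1) ≤ |z| ^ (n + 1) / 1 := by
          apply div_le_div_of_nonneg_left (by positivity) one_pos h1
      _ = |z| * |z| ^ n := by rw [div_one, pow_succ, mul_comm]
  -- Li2 series
  have hLi2_sum : Summable (fun n : ℕ => z ^ (n + 1) / ((n : ℝ) + 1) ^ 2) := by
    apply Summable.of_norm
    apply Summable.of_nonneg_of_le (fun n => norm_nonneg _) _ (hgeom.mul_left |z|)
    intro n
    have h1 : (1:ℝ) ≤ ((n:ℝ) + 1)^2 := by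
      have : (0:ℝ) ≤ (n:ℝ) := Nat.cast_nonneg n; nlinarith
    rw [Real.norm_eq_abs, abs_div, abs_pow]
    rw [abs_of_pos (by positivity : (0:ℝ) < ((n:ℝ)+1)^2)]
    calc |z| ^ (n + 1) / ((n:ℝ) + 1) ^ 2 ≤ |z| ^ (n + 1) / 1 := by
          apply div_le_div_of_nonneg_left (by positivity) one_pos h1
      _ = |z| * |z| ^ n := by rw [div_one, pow_succ, mul_comm]
  have hLi2 : HasSum (fun n : ℕ => z ^ (n + 1) / ((n : ℝ) + 1) ^ 2) (Li2 z) :=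
    hLi2_sum.hasSum
  -- main series summability
  have hS_sum : Summable (fun n : ℕ => H (n + 1) ^ 2 * z ^ (n + 1)) := by
    apply Summable.of_norm
    have hb : Summable (fun n : ℕ => ((n:ℝ) + 1) ^ 2 * |z| ^ (n + 1)) := by
      have := summable_pow_mul_geometric_of_norm_lt_one 2 (r := |z|)
        (by rwa [Real.norm_eq_abs, abs_abs])
      have h2 := (summable_nat_add_iff 1).mpr this
      simpa using h2
    apply Summable.of_nonneg_of_le (fun n => norm_nonneg _) _ hb
    intro n
    rw [Real.norm_eq_abs, abs_mul, abs_pow, abs_pow,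
      abs_of_nonneg (H_nonneg (n + 1))]
    apply mul_le_mul_of_nonneg_right _ (by positivity)
    apply pow_le_pow_left₀ (H_nonneg (n + 1))
    have := H_le (n + 1)
    push_cast at this ⊢
    linarith
  set S : ℝ := ∑' n : ℕ, H (n + 1) ^ 2 * z ^ (n + 1) with hSdef
  have hS : HasSum (fun n : ℕ => H (n + 1) ^ 2 * z ^ (n + 1)) S := hS_sum.hasSum
  -- Cauchy product of log series with itself
  have hconv : HasSum (fun n : ℕ => z ^ (n + 2) * (2 / (n + 2) * H (n + 1))) (L * L) := by
    have hc := hasSum_sum_range_mul_of_summable_norm hlog_norm hlog_norm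
    rw [hlog.tsum_eq] at hc
    have heq : ∀ n : ℕ, (∑ k ∈ Finset.range (n + 1),
        (z ^ (k + 1) / (k + 1)) * (z ^ (n - k + 1) / ((n - k : ℕ) + 1)))
        = z ^ (n + 2) * (2 / (n + 2) * H (n + 1)) := by
      intro n
      have : ∀ k ∈ Finset.range (n + 1),
          (z ^ (k + 1) / (k + 1)) * (z ^ (n - k + 1) / ((n - k : ℕ) + 1))
            = z ^ (n + 2) * ((1:ℝ) / ((k + 1) * (((n - k : ℕ) : ℝ) + 1))) := by
        intro k hk
        have hk' : k ≤ n := Nat.lt_succ_iff.mp (Finset.mem_range.mp hk)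
        have hp : z ^ (k + 1) * z ^ (n - k + 1) = z ^ (n + 2) := by
          rw [← pow_add]; congr 1; omega
        rw [div_mul_div_comm, hp, mul_one_div]
      rw [Finset.sum_congr rfl this, ← Finset.mul_sum, conv_sum]
    have heqf : (fun n : ℕ => ∑ k ∈ Finset.range (n + 1),
        (z ^ (k + 1) / (k + 1)) * (z ^ (n - k + 1) / ((n - k : ℕ) + 1)))
        = fun n : ℕ => z ^ (n + 2) * (2 / (n + 2) * H (n + 1)) := funext heq
    rw [heqf] at hc
    exact hc
  -- shifted versions of S
  have h1 : HasSum (fun n : ℕ => H (n + 1) ^ 2 * z ^ (n + 2)) (z * S) := by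
    have := hS.mul_left z
    have heq : (fun n : ℕ => H (n + 1) ^ 2 * z ^ (n + 2))
        = fun n : ℕ => z * (H (n + 1) ^ 2 * z ^ (n + 1)) := by
      funext n; ring
    rw [heq]; exact this
  have h2 : HasSum (fun n : ℕ => H (n + 2) ^ 2 * z ^ (n + 2)) (S - z) := by
    have := (hasSum_nat_add_iff' (f := fun n : ℕ => H (n + 1) ^ 2 * z ^ (n + 1)) 1).mpr hS
    simpa [H, Finset.sum_range_one] using this
  have h3 : HasSum (fun n : ℕ => (H (n + 2) ^ 2 - H (n + 1) ^ 2) * z ^ (n + 2))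
      (S - z - z * S) := by
    have := h2.sub h1
    have heq : (fun n : ℕ => (H (n + 2) ^ 2 - H (n + 1) ^ 2) * z ^ (n + 2))
        = fun n : ℕ => H (n + 2) ^ 2 * z ^ (n + 2) - H (n + 1) ^ 2 * z ^ (n + 2) := by
      funext n; ring
    rw [heq]; exact this
  -- shifted Li2
  have h4 : HasSum (fun n : ℕ => z ^ (n + 2) / ((n : ℝ) + 2) ^ 2) (Li2 z - z) := by
    have := (hasSum_nat_add_iff' (f := fun n : ℕ => z ^ (n + 1) / ((n : ℝ) + 1) ^ 2) 1).mpr hLi2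
    have heq : (fun n : ℕ => z ^ (n + 1 + 1) / (((n + 1 : ℕ) : ℝ) + 1) ^ 2)
        = fun n : ℕ => z ^ (n + 2) / ((n : ℝ) + 2) ^ 2 := by
      funext n; push_cast; ring_nf
    rw [heq] at this
    simpa using this
  -- combine
  have h5 : HasSum (fun n : ℕ => z ^ (n + 2) * (2 / (n + 2) * H (n + 1))
      + z ^ (n + 2) / ((n : ℝ) + 2) ^ 2) (L * L + (Li2 z - z)) := hconv.add h4
  have heq : (fun n : ℕ => (H (n + 2) ^ 2 - H (n + 1) ^ 2) * z ^ (n + 2))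
      = fun n : ℕ => z ^ (n + 2) * (2 / (n + 2) * H (n + 1))
        + z ^ (n + 2) / ((n : ℝ) + 2) ^ 2 := by
    funext n
    have hs : H (n + 2) = H (n + 1) + 1 / ((n : ℝ) + 2) := by
      rw [H_succ (n + 1)]; push_cast; ring_nf
    rw [hs]
    have hpos : ((n : ℝ) + 2) ≠ 0 := by positivity
    field_simp
    ring
  rw [heq] at h3
  have hkey : S - z - z * S = L * L + (Li2 z - z) := h3.unique h5
  have : S * (1 - z) = Li2 z + L * L := by linarith
  have hL2 : L * L = Real.log (1 - z) ^ 2 := by rw [hL]; ring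
  rw [hSdef] at this ⊢
  rw [eq_div_iff hz0]
  linarith [hL2 ▸ this]
end

section
/- For real q > 1, s > 0 and t > 0, ∑_{n=0}^∞ ∫₀¹ (q^{n+x+t} - 1)^{-s} dx = (q^t-1)^{1-s}/(s q^t log q) · ₂F₁(1,1;s+1;q^{-t}); equivalently, with [y]_q = (q^y - 1)/(q-1), ∫₀¹ ∑_{n=0}^∞ [n+x+t]_q^{-s} dx = ((q-1)^s/(s log q)) (q^t-1)^{1-s} q^{-t} ₂F₁(1,1;s+1;q^{-t}). -/
/-- The Pochhammer symbol `(a)_k = a(a+1)⋯(a+k-1)` for real `a`. -/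
noncomputable def poch (a : ℝ) (k : ℕ) : ℝ := ∏ j ∈ Finset.range k, (a + j)

/-- The hypergeometric series `₂F₁(1,1;c;z) = ∑_{k=0}^∞ (k!/(c)_k) z^k`. -/
noncomputable def F211 (c z : ℝ) : ℝ := ∑' k : ℕ, (Nat.factorial k : ℝ) / poch c k * z ^ k

/-- The `q`-analogue `[y]_q = (q^y - 1)/(q - 1)`. -/
noncomputable def qAnalog (q y : ℝ) : ℝ := (q ^ y - 1) / (q - 1)

/-!
Cutting `(0, ∞)` into the intervals `(n, n + 1]` turns the sum of integrals into
`∫₀^∞ (a e^{Lx} - 1)^{-s} dx` with `a = q^t`, `L = log q`. The substitution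
`w = (a - 1)/(a e^{Lx} - 1)` maps `(0, ∞)` onto `(0, 1)` and produces
`(a - 1)^{1-s}/L ⋅ ∫₀¹ w^{s-1}/(a - 1 + w) dw`. Expanding `1/(a - 1 + w) = ∑ₖ (1 - w)^k/a^{k+1}`
and integrating termwise against the beta integrals `∫₀¹ w^{s-1}(1 - w)^k dw = k!/(s)_{k+1}`
gives `₂F₁(1, 1; s + 1; 1/a)/(s a)`. The second identity is `(q - 1)^s` times the first; sum and
integral may be exchanged because the integrand is integrable on `(0, ∞)`.
-/

open MeasureTheory Set Real Nat

section

variable {E : Type*} [NormedAddCommGroup E]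

theorem hasSum_intervalIntegral_comp_nat_add [NormedSpace ℝ E] {f : ℝ → E}
    (hf : IntegrableOn f (Ioi 0)) :
    HasSum (fun n : ℕ => ∫ x in (0 : ℝ)..1, f (n + x)) (∫ x in Ioi 0, f x) := by
  have hU : ⋃ n : ℕ, Ioc (n : ℝ) (n + 1) = Ioi 0 := by
    simpa using iUnion_Ioc_map_succ_eq_Ioi (f := (Nat.cast : ℕ → ℝ)) (by simp)
      (not_bddAbove_iff.2 fun x => (exists_nat_gt x).elim fun n hn => ⟨n, ⟨n, rfl⟩, hn⟩)
  have hD : Pairwise (Function.onFun Disjoint fun n : ℕ => Ioc (n : ℝ) (n + 1)) := by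
    simpa using Nat.mono_cast.pairwise_disjoint_on_Ioc_succ
  simp_rw [intervalIntegral.integral_comp_add_left, add_zero,
    intervalIntegral.integral_of_le (le_add_of_nonneg_right zero_le_one)]
  rw [← hU] at hf ⊢
  exact hasSum_integral_iUnion (fun _ => measurableSet_Ioc) hD hf

theorem intervalIntegrable_comp_nat_add {f : ℝ → E} (hf : IntegrableOn f (Ioi 0)) (n : ℕ) :
    IntervalIntegrable (fun x => f (n + x)) volume 0 1 := by
  have h : IntervalIntegrable f volume n (n + 1) :=
    (intervalIntegrable_iff_integrableOn_Ioc_of_le (by linarith)).2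
      (hf.mono_set (Ioc_subset_Ioi_self.trans (Ioi_subset_Ioi (Nat.cast_nonneg n))))
  simpa using h.comp_add_left (n : ℝ)

theorem intervalIntegral_tsum_comp_nat_add [NormedSpace ℝ E] {f : ℝ → E}
    (hf : IntegrableOn f (Ioi 0)) :
    ∫ x in (0 : ℝ)..1, ∑' n : ℕ, f (n + x) = ∫ x in Ioi 0, f x := by
  have hnorm := (hasSum_intervalIntegral_comp_nat_add hf.norm).summable
  simp_rw [intervalIntegral.integral_of_le zero_le_one] at hnorm ⊢
  rw [← integral_tsum_of_summable_integral_norm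
    (fun n => (intervalIntegrable_comp_nat_add hf n).1) hnorm]
  simpa only [intervalIntegral.integral_of_le zero_le_one] using
    (hasSum_intervalIntegral_comp_nat_add hf).tsum_eq

end

theorem integrableOn_rpow_mul_of_continuousOn {s : ℝ} (hs : 0 < s) {g : ℝ → ℝ}
    (hg : ContinuousOn g (Icc 0 1)) : IntegrableOn (fun w => w ^ (s - 1) * g w) (Ioo 0 1) :=
  ((intervalIntegral.integrableOn_Ioo_rpow_iff one_pos).2 (by linarith)).mul_continuousOn_of_subset
    hg measurableSet_Ioo isCompact_Icc Ioo_subset_Icc_self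

theorem poch_pos {a : ℝ} (ha : 0 < a) (k : ℕ) : 0 < poch a k :=
  Finset.prod_pos fun _ _ => by positivity

theorem poch_succ_right (a : ℝ) (k : ℕ) : poch a (k + 1) = poch a k * (a + k) :=
  Finset.prod_range_succ _ _

theorem poch_succ_left (a : ℝ) (k : ℕ) : poch a (k + 1) = a * poch (a + 1) k := by
  rw [poch, Finset.prod_range_succ', poch, mul_comm]
  push_cast
  simp_rw [add_assoc, add_comm (1 : ℝ), add_zero]

theorem factorial_le_poch {c : ℝ} (hc : 1 ≤ c) (k : ℕ) : (k ! : ℝ) ≤ poch c k := by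
  rw [← Finset.prod_range_add_one_eq_factorial, poch]
  push_cast
  exact Finset.prod_le_prod (fun _ _ => by positivity) fun _ _ => by linarith

theorem summable_F211 {c z : ℝ} (hc : 1 ≤ c) (hz0 : 0 ≤ z) (hz1 : z < 1) :
    Summable fun k : ℕ => (k ! : ℝ) / poch c k * z ^ k := by
  refine (summable_geometric_of_lt_one hz0 hz1).of_nonneg_of_le (fun k => ?_) fun k => ?_
  · have := poch_pos (by linarith : 0 < c) k
    positivity
  · exact mul_le_of_le_one_left (by positivity)
      ((div_le_one (poch_pos (by linarith) k)).2 (factorial_le_poch hc k))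

theorem integral_rpow_mul_one_sub_pow {s : ℝ} (hs : 0 < s) (k : ℕ) :
    ∫ w in Ioo 0 1, w ^ (s - 1) * (1 - w) ^ k = k ! / poch s (k + 1) := by
  induction k generalizing s with
  | zero =>
    rw [← integral_Ioc_eq_integral_Ioo, ← intervalIntegral.integral_of_le zero_le_one]
    simp [integral_rpow (Or.inl (by linarith : -1 < s - 1)), zero_rpow hs.ne', poch]
  | succ k ih =>
    have hsplit : ∀ w ∈ Ioo (0 : ℝ) 1, w ^ (s - 1) * (1 - w) ^ (k + 1)
        = w ^ (s - 1) * (1 - w) ^ k - w ^ (s + 1 - 1) * (1 - w) ^ k := fun w hw => by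
      rw [show s + 1 - 1 = s - 1 + 1 by ring, rpow_add_one hw.1.ne']
      ring
    rw [setIntegral_congr_fun measurableSet_Ioo hsplit,
      integral_sub (integrableOn_rpow_mul_of_continuousOn hs (by fun_prop))
        (integrableOn_rpow_mul_of_continuousOn (by linarith) (by fun_prop)),
      ih hs, ih (by linarith), poch_succ_left s (k + 1), poch_succ_left s k,
      poch_succ_right (s + 1) k]
    have := poch_pos (by linarith : 0 < s + 1) k
    push_cast [Nat.factorial_succ]
    field_simp
    ring

theorem hasSum_one_sub_pow_mul_inv_pow {a w : ℝ} (ha : 1 < a) (hw0 : 0 ≤ w) (hw1 : w ≤ 1) :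
    HasSum (fun k : ℕ => (1 - w) ^ k * a⁻¹ ^ (k + 1)) (a - 1 + w)⁻¹ := by
  have ha0 : 0 < a := by linarith
  have hr1 : (1 - w) * a⁻¹ < 1 := by
    rw [← div_eq_mul_inv, div_lt_one ha0]; linarith
  have h := (hasSum_geometric_of_lt_one (by positivity) hr1).mul_left a⁻¹
  have hb : 0 < a - 1 + w := by linarith
  rw [← mul_inv, show a * (1 - (1 - w) * a⁻¹) = a - 1 + w by field_simp; ring] at h
  have e : (fun k : ℕ => (1 - w) ^ k * a⁻¹ ^ (k + 1)) = fun k => a⁻¹ * ((1 - w) * a⁻¹) ^ k := by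
    ext k
    rw [mul_pow, pow_succ]
    ring
  rw [e]
  exact h

theorem integral_rpow_div_add_eq_F211 {a s : ℝ} (ha : 1 < a) (hs : 0 < s) :
    ∫ w in Ioo 0 1, w ^ (s - 1) / (a - 1 + w) = F211 (s + 1) a⁻¹ / (s * a) := by
  set F : ℕ → ℝ → ℝ := fun k w => w ^ (s - 1) * (1 - w) ^ k * a⁻¹ ^ (k + 1)
  have hF_int : ∀ k, ∫ w in Ioo 0 1, F k w = (s * a)⁻¹ * (k ! / poch (s + 1) k * a⁻¹ ^ k) := by
    intro k
    rw [integral_mul_const, integral_rpow_mul_one_sub_pow hs, poch_succ_left]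
    ring
  have hF_norm : ∀ k, ∫ w in Ioo 0 1, ‖F k w‖ = ∫ w in Ioo 0 1, F k w := fun k =>
    setIntegral_congr_fun measurableSet_Ioo fun w ⟨hw0, hw1⟩ => norm_of_nonneg (by
      have : 0 ≤ 1 - w := by linarith
      positivity)
  have hF_sum : Summable fun k => ∫ w in Ioo 0 1, ‖F k w‖ := by
    simp_rw [hF_norm, hF_int]
    exact (summable_F211 (by linarith) (by positivity) (inv_lt_one_of_one_lt₀ ha)).mul_left _
  have hF_tsum : ∀ w ∈ Ioo (0 : ℝ) 1, ∑' k, F k w = w ^ (s - 1) / (a - 1 + w) := fun w hw => by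
    simp_rw [F, mul_assoc]
    rw [((hasSum_one_sub_pow_mul_inv_pow ha hw.1.le hw.2.le).mul_left _).tsum_eq, div_eq_mul_inv]
  calc ∫ w in Ioo 0 1, w ^ (s - 1) / (a - 1 + w)
      = ∫ w in Ioo 0 1, ∑' k, F k w := (setIntegral_congr_fun measurableSet_Ioo hF_tsum).symm
    _ = ∑' k, ∫ w in Ioo 0 1, F k w := (integral_tsum_of_summable_integral_norm
        (fun k => (integrableOn_rpow_mul_of_continuousOn hs (by fun_prop)).mul_const _) hF_sum).symm
    _ = F211 (s + 1) a⁻¹ / (s * a) := by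
      rw [tsum_congr hF_int, tsum_mul_left, F211, div_eq_inv_mul]

theorem lt_mul_exp {a L x : ℝ} (ha : 0 < a) (hL : 0 < L) (hx : 0 < x) : a < a * exp (L * x) :=
  lt_mul_right ha (one_lt_exp_iff.2 (by positivity))

noncomputable def betaSubst (a L x : ℝ) : ℝ := (a - 1) / (a * exp (L * x) - 1)

section

variable {a L : ℝ}

theorem hasDerivAt_betaSubst (ha : 1 < a) (hL : 0 < L) {x : ℝ} (hx : 0 < x) :
    HasDerivAt (betaSubst a L)
      (-((a - 1) * L * (a * exp (L * x))) / (a * exp (L * x) - 1) ^ 2) x := by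
  have hu : a * exp (L * x) - 1 ≠ 0 := by linarith [lt_mul_exp (one_pos.trans ha) hL hx]
  have hfun : betaSubst a L = fun y => (a - 1) * (a * exp (L * y) - 1)⁻¹ := by
    ext y; exact div_eq_mul_inv _ _
  rw [hfun]
  exact (((((hasDerivAt_id' x).const_mul L).exp.const_mul a).sub_const 1).inv hu
    |>.const_mul (a - 1)).congr_deriv (by ring)

theorem mapsTo_betaSubst (ha : 1 < a) (hL : 0 < L) : MapsTo (betaSubst a L) (Ioi 0) (Ioo 0 1) := by
  intro x hx
  have := lt_mul_exp (one_pos.trans ha) hL hx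
  constructor
  · exact div_pos (by linarith) (by linarith)
  · exact (div_lt_one (by linarith)).2 (by linarith)

theorem image_betaSubst_Ioi (ha : 1 < a) (hL : 0 < L) : betaSubst a L '' Ioi 0 = Ioo 0 1 := by
  refine (mapsTo_betaSubst ha hL).image_subset.antisymm fun w ⟨hw0, hw1⟩ => ?_
  have hw : 0 < a * w := by nlinarith
  have hgt : 1 < (a - 1 + w) / (a * w) := (one_lt_div hw).2 (by nlinarith)
  refine ⟨log ((a - 1 + w) / (a * w)) / L, div_pos (log_pos hgt) hL, ?_⟩
  rw [betaSubst, mul_div_cancel₀ _ hL.ne', exp_log (by linarith), mul_div_assoc',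
    mul_div_mul_left _ _ (by linarith), div_sub_one hw0.ne', add_sub_cancel_right,
    div_div_cancel₀ (by linarith)]

theorem injOn_betaSubst (ha : 1 < a) (hL : 0 < L) : InjOn (betaSubst a L) (Ioi 0) := by
  intro x hx y hy hxy
  have := lt_mul_exp (one_pos.trans ha) hL hx
  have := lt_mul_exp (one_pos.trans ha) hL hy
  rw [betaSubst, betaSubst, div_eq_div_iff (by linarith) (by linarith)] at hxy
  have h := mul_left_cancel₀ (by linarith : a - 1 ≠ 0) hxy
  have h' := mul_left_cancel₀ (by linarith : a ≠ 0) (sub_left_injective h)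
  exact mul_left_cancel₀ hL.ne' (exp_injective h').symm

theorem abs_deriv_betaSubst_mul (ha : 1 < a) (hL : 0 < L) (s : ℝ) {x : ℝ} (hx : 0 < x) :
    |-((a - 1) * L * (a * exp (L * x))) / (a * exp (L * x) - 1) ^ 2|
        * (betaSubst a L x ^ (s - 1) / (a - 1 + betaSubst a L x))
      = L * (a - 1) ^ (s - 1) * (a * exp (L * x) - 1) ^ (-s) := by
  have hE := lt_mul_exp (one_pos.trans ha) hL hx
  rw [betaSubst]
  set E := a * exp (L * x)
  have hu : 0 < E - 1 := by linarith
  have h1 : 0 < a - 1 := by linarith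
  rw [abs_div, abs_neg, abs_of_pos (by positivity), abs_of_pos (by positivity),
    div_rpow h1.le hu.le, rpow_neg hu.le, rpow_sub_one hu.ne']
  field_simp
  ring

theorem integrableOn_rpow_div_add (ha : 1 < a) {s : ℝ} (hs : 0 < s) :
    IntegrableOn (fun w => w ^ (s - 1) / (a - 1 + w)) (Ioo 0 1) := by
  simpa only [div_eq_mul_inv] using
    integrableOn_rpow_mul_of_continuousOn (g := fun w => (a - 1 + w)⁻¹) hs
      (ContinuousOn.inv₀ (by fun_prop) fun w hw => by linarith [hw.1])

theorem integrableOn_Ioi_mul_exp_sub_one_rpow (ha : 1 < a) (hL : 0 < L) {s : ℝ} (hs : 0 < s) :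
    IntegrableOn (fun x => (a * exp (L * x) - 1) ^ (-s)) (Ioi 0) := by
  have h := integrableOn_rpow_div_add ha hs
  rw [← image_betaSubst_Ioi ha hL, integrableOn_image_iff_integrableOn_abs_deriv_smul measurableSet_Ioi
    (fun x hx => (hasDerivAt_betaSubst ha hL hx).hasDerivWithinAt) (injOn_betaSubst ha hL)] at h
  have hc : L * (a - 1) ^ (s - 1) ≠ 0 := by
    have : 0 < a - 1 := by linarith
    positivity
  refine (integrable_const_mul_iff (isUnit_iff_ne_zero.2 hc) _).1 ?_
  exact h.congr_fun (fun x hx => abs_deriv_betaSubst_mul ha hL s hx) measurableSet_Ioi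

theorem integral_Ioi_mul_exp_sub_one_rpow (ha : 1 < a) (hL : 0 < L) (s : ℝ) :
    ∫ x in Ioi 0, (a * exp (L * x) - 1) ^ (-s)
      = (a - 1) ^ (1 - s) / L * ∫ w in Ioo 0 1, w ^ (s - 1) / (a - 1 + w) := by
  rw [← image_betaSubst_Ioi ha hL, integral_image_eq_integral_abs_deriv_smul measurableSet_Ioi
    (fun x hx => (hasDerivAt_betaSubst ha hL hx).hasDerivWithinAt) (injOn_betaSubst ha hL),
    setIntegral_congr_fun measurableSet_Ioi fun x hx =>
      (smul_eq_mul _ _).trans (abs_deriv_betaSubst_mul ha hL s hx), integral_const_mul]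
  have h1 : 0 < a - 1 := by linarith
  have hc : (a - 1) ^ (1 - s) / L * (L * (a - 1) ^ (s - 1)) = 1 := by
    field_simp
    rw [← rpow_add h1, sub_add_sub_cancel', sub_self, rpow_zero]
  rw [← mul_assoc, hc, one_mul]

end

theorem rpow_add_eq_mul_exp {q : ℝ} (hq : 0 < q) (x t : ℝ) :
    q ^ (x + t) = q ^ t * exp (log q * x) := by
  rw [rpow_add hq, rpow_def_of_pos hq, mul_comm]

theorem integrableOn_Ioi_rpow_add_sub_one {q s t : ℝ} (hq : 1 < q) (hs : 0 < s) (ht : 0 < t) :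
    IntegrableOn (fun x => (q ^ (x + t) - 1) ^ (-s)) (Ioi 0) := by
  simp_rw [rpow_add_eq_mul_exp (by linarith : 0 < q)]
  exact integrableOn_Ioi_mul_exp_sub_one_rpow (one_lt_rpow hq ht) (log_pos hq) hs

theorem integral_Ioi_rpow_add_sub_one {q s t : ℝ} (hq : 1 < q) (hs : 0 < s) (ht : 0 < t) :
    ∫ x in Ioi 0, (q ^ (x + t) - 1) ^ (-s)
      = (q ^ t - 1) ^ (1 - s) / (s * q ^ t * log q) * F211 (s + 1) (q ^ (-t)) := by
  have ha := one_lt_rpow hq ht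
  simp_rw [rpow_add_eq_mul_exp (by linarith : 0 < q)]
  rw [integral_Ioi_mul_exp_sub_one_rpow ha (log_pos hq), integral_rpow_div_add_eq_F211 ha hs,
    rpow_neg (by linarith)]
  ring

theorem qAnalog_rpow_neg {q y : ℝ} (hq : 1 < q) (hy : 0 ≤ y) (s : ℝ) :
    qAnalog q y ^ (-s) = (q - 1) ^ s * (q ^ y - 1) ^ (-s) := by
  rw [qAnalog, div_rpow (sub_nonneg.2 (one_le_rpow hq.le hy)) (by linarith),
    rpow_neg (x := q - 1) (by linarith), div_inv_eq_mul, mul_comm]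

/-- For `q > 1`, `s > 0`, `t > 0`:
`∑_{n=0}^∞ ∫₀¹ (q^{n+x+t}-1)^{-s} dx = (q^t-1)^{1-s}/(s q^t log q) ⋅ ₂F₁(1,1;s+1;q^{-t})`;
equivalently `∫₀¹ ζ_q(s, x+t) dx = ((q-1)^s/(s log q)) (q^t-1)^{1-s} q^{-t} ₂F₁(1,1;s+1;q^{-t})`
where `ζ_q(s,x) = ∑_{n=0}^∞ [n+x]_q^{-s}`. -/
theorem integral_q_hurwitz_zeta (q s t : ℝ) (hq : 1 < q) (hs : 0 < s) (ht : 0 < t) :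
    (∑' n : ℕ, ∫ x in (0 : ℝ)..1, (q ^ ((n : ℝ) + x + t) - 1) ^ (-s))
        = (q ^ t - 1) ^ (1 - s) / (s * q ^ t * Real.log q) * F211 (s + 1) (q ^ (-t)) ∧
      (∫ x in (0 : ℝ)..1, ∑' n : ℕ, (qAnalog q ((n : ℝ) + x + t)) ^ (-s))
        = (q - 1) ^ s / (s * Real.log q) * ((q ^ t - 1) ^ (1 - s) / q ^ t)
            * F211 (s + 1) (q ^ (-t)) := by
  have hf := integrableOn_Ioi_rpow_add_sub_one hq hs ht
  have hI := integral_Ioi_rpow_add_sub_one hq hs ht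
  have hJ : ∫ x in (0 : ℝ)..1, ∑' n : ℕ, (q ^ ((n : ℝ) + x + t) - 1) ^ (-s)
      = (q ^ t - 1) ^ (1 - s) / (s * q ^ t * log q) * F211 (s + 1) (q ^ (-t)) :=
    (intervalIntegral_tsum_comp_nat_add hf).trans hI
  refine ⟨(hasSum_intervalIntegral_comp_nat_add hf).tsum_eq.trans hI, ?_⟩
  have hq_analog : ∀ x ∈ uIcc (0 : ℝ) 1, ∑' n : ℕ, qAnalog q ((n : ℝ) + x + t) ^ (-s)
      = (q - 1) ^ s * ∑' n : ℕ, (q ^ ((n : ℝ) + x + t) - 1) ^ (-s) := fun x hx => by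
    rw [uIcc_of_le zero_le_one] at hx
    rw [← tsum_mul_left]
    exact tsum_congr fun n => qAnalog_rpow_neg hq (by linarith [hx.1, n.cast_nonneg' (α := ℝ)]) s
  rw [intervalIntegral.integral_congr hq_analog, intervalIntegral.integral_const_mul, hJ]
  ring
end
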